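/- Let σ ≥ 0, u₀ = Σ_n c_n h_n ∈ ℋ^σ(ℝ³), and s ≥ σ. Assume λ_n^{2s}|c_n|² ≤ 1 for all n ∈ ℕ. Then for all t ≥ 0 and all N, μ( u ∈ ℋ^σ(ℝ³) : ‖χ(H/N²) u‖_{ℋ^s(ℝ³)} ≤ t ) ≤ exp( t² − (1/2)‖χ(H/N²) u₀‖²_{ℋ^s(ℝ³)} ). -/

import Mathlib

open MeasureTheory Complex Filter Set
open scoped ENNReal FourierTransform ProbabilityTheory

noncomputable section

abbrev Rd (d : ℕ) := EuclideanSpace ℝ (Fin d)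

/-- The Laplacian of a complex-valued function on `ℝ^d`. -/
def laplacianC {d : ℕ} (f : Rd d → ℂ) (x : Rd d) : ℂ :=
  ∑ i : Fin d, iteratedFDeriv ℝ 2 f x (fun _ => EuclideanSpace.single i (1 : ℝ))

/-- The harmonic oscillator `H = -Δ + |x|²`. -/
def harmonicOsc {d : ℕ} (f : Rd d → ℂ) (x : Rd d) : ℂ :=
  - laplacianC f x + (‖x‖ : ℂ) ^ 2 * f x

/-- An orthonormal basis of `L²(ℝ^d)` consisting of eigenfunctions of the harmonic
oscillator (Hermite functions), with eigenvalues `λ_n²` arranged nondecreasingly. -/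
structure HermiteBasis (d : ℕ) where
  h : ℕ → Rd d → ℂ
  lam : ℕ → ℝ
  lam_pos : ∀ n, 0 < lam n
  lam_mono : Monotone lam
  smooth : ∀ n, ContDiff ℝ (⊤ : ℕ∞) (h n)
  eigen : ∀ n x, harmonicOsc (h n) x = ((lam n : ℂ)) ^ 2 * h n x
  orthonormal : ∀ n m, ∫ x, (starRingEnd ℂ) (h n x) * h m x = if n = m then (1 : ℂ) else 0
  complete : ∀ f : Rd d → ℂ, MemLp f 2 volume →
    (∀ n, ∫ x, (starRingEnd ℂ) (h n x) * f x = 0) → f =ᵐ[volume] 0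

variable {d : ℕ}

/-- Hermite coefficient of a function. -/
def coef (B : HermiteBasis d) (u : Rd d → ℂ) (n : ℕ) : ℂ :=
  ∫ x, (starRingEnd ℂ) (B.h n x) * u x

/-- The harmonic Sobolev norm `‖u‖_{ℋ^s} = ‖H^{s/2}u‖_{L²}`, computed spectrally. -/
def hsNorm (B : HermiteBasis d) (s : ℝ) (u : Rd d → ℂ) : ℝ≥0∞ :=
  (∑' n, ENNReal.ofReal (B.lam n ^ (2 * s) * ‖coef B u n‖ ^ 2)) ^ (1/2 : ℝ)

/-- Membership in the harmonic Sobolev space `ℋ^s`. -/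
def MemHs (B : HermiteBasis d) (s : ℝ) (u : Rd d → ℂ) : Prop :=
  Summable (fun n => B.lam n ^ (2 * s) * ‖coef B u n‖ ^ 2)

/-- The spectral power `H^a` of the harmonic oscillator. -/
def hPow (B : HermiteBasis d) (a : ℝ) (u : Rd d → ℂ) : Rd d → ℂ :=
  fun x => ∑' n, ((B.lam n ^ (2 * a) : ℝ) : ℂ) * coef B u n * B.h n x

/-- The norm of `𝒲^{s,p}`, that is `‖H^{s/2}u‖_{L^p}`. -/
def wsNorm (B : HermiteBasis d) (s : ℝ) (p : ℝ≥0∞) (u : Rd d → ℂ) : ℝ≥0∞ :=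
  eLpNorm (hPow B (s/2) u) p volume

/-- The Hermite flow `e^{itH}`. -/
def hFlow (B : HermiteBasis d) (t : ℝ) (u : Rd d → ℂ) : Rd d → ℂ :=
  fun x => ∑' n, Complex.exp (Complex.I * (t : ℂ) * ((B.lam n : ℂ)) ^ 2) * coef B u n * B.h n x

/-- The usual Sobolev norm `‖u‖_{H^s}` via the Fourier transform. -/
def sobNorm {d : ℕ} (s : ℝ) (u : Rd d → ℂ) : ℝ≥0∞ :=
  eLpNorm (fun ξ : Rd d => ((1 + ‖ξ‖ ^ 2) ^ (s/2) : ℝ) * ‖𝓕 u ξ‖) 2 volume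

/-- Membership in the (flat) Sobolev space `H^s`, `s ≥ 0`. -/
def MemSob {d : ℕ} (s : ℝ) (u : Rd d → ℂ) : Prop :=
  MemLp u 2 volume ∧ sobNorm s u < ⊤

/-- The fractional Laplacian `(-Δ)^{s/2}` (Fourier multiplier `‖ξ‖^s`). -/
def fracLap {d : ℕ} (s : ℝ) (u : Rd d → ℂ) : Rd d → ℂ :=
  𝓕⁻ (fun ξ : Rd d => ((‖ξ‖ ^ s : ℝ) : ℂ) * 𝓕 u ξ)

/-- The Bessel potential `(1-Δ)^{s/2}` realizing the `W^{s,p}` norms. -/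
def besselPot {d : ℕ} (s : ℝ) (u : Rd d → ℂ) : Rd d → ℂ :=
  𝓕⁻ (fun ξ : Rd d => (((1 + ‖ξ‖ ^ 2) ^ (s/2) : ℝ) : ℂ) * 𝓕 u ξ)

/-- The norm of the usual Sobolev space `W^{s,p}`. -/
def sobWNorm {d : ℕ} (s : ℝ) (p : ℝ≥0∞) (u : Rd d → ℂ) : ℝ≥0∞ :=
  eLpNorm (besselPot s u) p volume

/-- The Japanese bracket `⟨x⟩ = √(1+|x|²)`. -/
def jap {d : ℕ} (x : Rd d) : ℝ := Real.sqrt (1 + ‖x‖ ^ 2)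

/-- `L^q` norm in time of a `ℝ≥0∞`-valued quantity. -/
def timeLp (q : ℝ≥0∞) (μ : Measure ℝ) (G : ℝ → ℝ≥0∞) : ℝ≥0∞ :=
  if q = ∞ then essSup G μ else (∫⁻ t, G t ^ q.toReal ∂μ) ^ (1 / q.toReal)

/-- The free Schrödinger flow `e^{itΔ}`. -/
def freeFlow {d : ℕ} (t : ℝ) (u : Rd d → ℂ) : Rd d → ℂ :=
  𝓕⁻ (fun ξ : Rd d =>
    Complex.exp (-Complex.I * (t : ℂ) * ((4 * Real.pi ^ 2 * ‖ξ‖ ^ 2 : ℝ) : ℂ)) * 𝓕 u ξ)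

/-- The standard complex Gaussian measure `𝒩_ℂ(0,1)`, with density `π⁻¹ e^{-|z|²}`. -/
def stdGaussianC : Measure ℂ :=
  ((ProbabilityTheory.gaussianReal 0 (1/2)).prod (ProbabilityTheory.gaussianReal 0 (1/2))).map
    (fun p => (p.1 : ℂ) + (p.2 : ℂ) * Complex.I)

/-- A sequence of i.i.d. standard complex Gaussian random variables. -/
def IsStdCGaussianSeq {Ω : Type*} [MeasurableSpace Ω] (P : Measure Ω) (g : ℕ → Ω → ℂ) : Prop :=
  (∀ n, Measurable (g n)) ∧
  ProbabilityTheory.iIndepFun g P ∧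
  ∀ n, Measure.map (g n) P = stdGaussianC

/-- The randomization `u₀^ω = Σ c_n g_n(ω) h_n`. -/
def randSeries {Ω : Type*} (B : HermiteBasis d) (c : ℕ → ℂ) (g : ℕ → Ω → ℂ) (ω : Ω) :
    Rd d → ℂ :=
  fun x => ∑' n, c n * g n ω * B.h n x

/-- A smooth compactly supported cutoff equal to `1` on `[0,1]` and vanishing on `[2,∞)`. -/
def IsBumpCutoff (η : ℝ → ℝ) : Prop :=
  ContDiff ℝ (⊤ : ℕ∞) η ∧ HasCompactSupport η ∧ (∀ x ∈ Icc (0:ℝ) 1, η x = 1) ∧ ∀ x, (2:ℝ) ≤ x → η x = 0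

/-- The dyadic spectral projector `Δ_N = ψ(H/N²)` with `ψ(x) = η(x) - η(4x)`. -/
def dyadicProj (B : HermiteBasis d) (η : ℝ → ℝ) (N : ℝ) (u : Rd d → ℂ) : Rd d → ℂ :=
  fun x => ∑' n,
    (((η (B.lam n ^ 2 / N ^ 2) - η (4 * (B.lam n ^ 2 / N ^ 2))) : ℝ) : ℂ) * coef B u n * B.h n x

/-- Space-time `L²` norm on `[a,b] × ℝ^d`. -/
def spaceTimeL2 {d : ℕ} (a b : ℝ) (F : ℝ → Rd d → ℂ) : ℝ≥0∞ :=
  eLpNorm (fun p : ℝ × Rd d => F p.1 p.2) 2 ((volume.restrict (Icc a b)).prod volume)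


section AuxStatement16

open Real in
lemma aux_meas_exp_sq {a : ℝ} : Measurable fun x : ℝ => ENNReal.ofReal (Real.exp (-(a * x ^ 2))) :=
  ENNReal.measurable_ofReal.comp
    (Real.measurable_exp.comp ((measurable_id.pow_const 2).const_mul a).neg)

lemma aux_meas_exp_nsq {a : ℝ} : Measurable fun z : ℂ => ENNReal.ofReal (Real.exp (-(a * ‖z‖ ^ 2))) :=
  ENNReal.measurable_ofReal.comp
    (Real.measurable_exp.comp ((measurable_norm.pow_const 2).const_mul a).neg)

lemma aux_meas_normsq : Measurable (fun z : ℂ => ENNReal.ofReal (‖z‖ ^ 2)) :=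
  ENNReal.measurable_ofReal.comp (measurable_norm.pow_const 2)

lemma aux_measurable_mk : Measurable (fun p : ℝ × ℝ => (p.1 : ℂ) + (p.2 : ℂ) * Complex.I) :=
  (Complex.measurable_ofReal.comp measurable_fst).add
    ((Complex.measurable_ofReal.comp measurable_snd).mul_const Complex.I)

lemma aux_norm_mk_sq (x y : ℝ) : ‖(x : ℂ) + (y : ℂ) * Complex.I‖ ^ 2 = x ^ 2 + y ^ 2 := by
  rw [Complex.sq_norm, Complex.normSq_add_mul_I]

open Real in
lemma aux_gauss_real_moment {a : ℝ} (ha : 0 ≤ a) :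
    ∫⁻ x, ENNReal.ofReal (Real.exp (-(a * x ^ 2))) ∂(ProbabilityTheory.gaussianReal 0 (1/2))
      = ENNReal.ofReal ((Real.sqrt (1 + a))⁻¹) := by
  have h1a : (0:ℝ) < 1 + a := by linarith
  have hπ : (0:ℝ) < Real.sqrt π := Real.sqrt_pos.mpr pi_pos
  rw [ProbabilityTheory.gaussianReal_of_var_ne_zero 0 (by norm_num),
    lintegral_withDensity_eq_lintegral_mul _ (ProbabilityTheory.measurable_gaussianPDF 0 (1/2))
      aux_meas_exp_sq]
  have hpdf : ∀ x : ℝ, ProbabilityTheory.gaussianPDFReal 0 (1/2) x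
      = (Real.sqrt π)⁻¹ * Real.exp (-x ^ 2) := by
    intro x
    simp only [ProbabilityTheory.gaussianPDFReal]
    norm_num
    field_simp
  have key : ∀ x : ℝ, (ProbabilityTheory.gaussianPDF 0 (1/2) *
        fun x => ENNReal.ofReal (Real.exp (-(a * x ^ 2)))) x
      = ENNReal.ofReal ((Real.sqrt π)⁻¹ * Real.exp (-(1 + a) * x ^ 2)) := by
    intro x
    simp only [Pi.mul_apply, ProbabilityTheory.gaussianPDF, hpdf]
    rw [← ENNReal.ofReal_mul (by positivity)]
    congr 1
    rw [mul_assoc, ← Real.exp_add]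
    ring_nf
  simp only [key]
  rw [← ofReal_integral_eq_lintegral_ofReal
    (((integrable_exp_neg_mul_sq h1a).const_mul _))
    (Filter.Eventually.of_forall (fun x => by positivity))]
  rw [integral_const_mul, integral_gaussian]
  congr 1
  rw [Real.sqrt_div pi_pos.le]
  field_simp

open Real in
lemma aux_gauss_cplx_moment {a : ℝ} (ha : 0 ≤ a) :
    ∫⁻ z, ENNReal.ofReal (Real.exp (-(a * ‖z‖ ^ 2))) ∂stdGaussianC
      = ENNReal.ofReal ((1 + a)⁻¹) := by
  have hr := aux_gauss_real_moment ha
  have h1a : (0:ℝ) < 1 + a := by linarith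
  rw [stdGaussianC, lintegral_map aux_meas_exp_nsq aux_measurable_mk]
  have key : ∀ p : ℝ × ℝ, ENNReal.ofReal (Real.exp (-(a * ‖(p.1 : ℂ) + (p.2:ℂ) * Complex.I‖ ^ 2)))
      = ENNReal.ofReal (Real.exp (-(a * p.1 ^ 2))) * ENNReal.ofReal (Real.exp (-(a * p.2 ^ 2))) := by
    intro p
    rw [aux_norm_mk_sq, ← ENNReal.ofReal_mul (by positivity), ← Real.exp_add]
    ring_nf
  simp only [key]
  have hfm : Measurable (fun p : ℝ × ℝ => ENNReal.ofReal (Real.exp (-(a * p.1 ^ 2)))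
      * ENNReal.ofReal (Real.exp (-(a * p.2 ^ 2)))) :=
    (aux_meas_exp_sq.comp measurable_fst).mul (aux_meas_exp_sq.comp measurable_snd)
  rw [MeasureTheory.lintegral_prod _ hfm.aemeasurable]
  simp only [lintegral_const_mul _ (aux_meas_exp_sq (a := a))]
  rw [lintegral_mul_const _ aux_meas_exp_sq, hr, ← ENNReal.ofReal_mul (by positivity)]
  congr 1
  rw [← mul_inv, Real.mul_self_sqrt h1a.le]

open Real in
lemma aux_gauss_cplx_sq : ∫⁻ z, ENNReal.ofReal (‖z‖ ^ 2) ∂stdGaussianC < ⊤ := by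
  rw [stdGaussianC, lintegral_map aux_meas_normsq aux_measurable_mk]
  have key : ∀ p : ℝ × ℝ, ENNReal.ofReal (‖(p.1 : ℂ) + (p.2:ℂ) * Complex.I‖ ^ 2)
      = ENNReal.ofReal (p.1 ^ 2) + ENNReal.ofReal (p.2 ^ 2) := by
    intro p
    rw [aux_norm_mk_sq, ENNReal.ofReal_add (by positivity) (by positivity)]
  simp only [key]
  have hm : Measurable fun x : ℝ => ENNReal.ofReal (x ^ 2) :=
    ENNReal.measurable_ofReal.comp (measurable_id.pow_const 2)
  have hmm1 : Measurable (fun p : ℝ × ℝ => ENNReal.ofReal (p.1 ^ 2)) := hm.comp measurable_fst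
  rw [lintegral_add_left hmm1]
  have hfin : ∫⁻ x, ENNReal.ofReal (x ^ 2) ∂(ProbabilityTheory.gaussianReal 0 (1/2)) < ⊤ := by
    rw [ProbabilityTheory.gaussianReal_of_var_ne_zero 0 (by norm_num),
      lintegral_withDensity_eq_lintegral_mul _ (ProbabilityTheory.measurable_gaussianPDF 0 (1/2))
        hm]
    have hpdf : ∀ x : ℝ, ProbabilityTheory.gaussianPDFReal 0 (1/2) x
        = (Real.sqrt π)⁻¹ * Real.exp (-x ^ 2) := by
      intro x
      simp only [ProbabilityTheory.gaussianPDFReal]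
      norm_num
      field_simp
    have key2 : ∀ x : ℝ, (ProbabilityTheory.gaussianPDF 0 (1/2) *
          fun x => ENNReal.ofReal (x ^ 2)) x
        = ENNReal.ofReal ((Real.sqrt π)⁻¹ * (x ^ 2 * Real.exp (-1 * x ^ 2))) := by
      intro x
      simp only [Pi.mul_apply, ProbabilityTheory.gaussianPDF, hpdf]
      rw [← ENNReal.ofReal_mul (by positivity)]
      congr 1
      ring_nf
    simp only [key2]
    have hint : Integrable (fun x : ℝ => (Real.sqrt π)⁻¹ * (x ^ 2 * Real.exp (-1 * x ^ 2))) := by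
      have h2 := integrable_rpow_mul_exp_neg_mul_sq (b := 1) one_pos (s := 2) (by norm_num)
      have he : (fun x : ℝ => x ^ (2:ℝ) * Real.exp (-1 * x ^ 2))
          = fun x : ℝ => x ^ 2 * Real.exp (-1 * x ^ 2) := by
        funext x
        rw [show (2:ℝ) = ((2:ℕ):ℝ) by norm_num, Real.rpow_natCast]
      rw [he] at h2
      exact h2.const_mul _
    exact hint.lintegral_lt_top
  refine ENNReal.add_lt_top.mpr ⟨?_, ?_⟩
  · calc ∫⁻ p : ℝ × ℝ, ENNReal.ofReal (p.1 ^ 2)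
          ∂((ProbabilityTheory.gaussianReal 0 (1/2)).prod (ProbabilityTheory.gaussianReal 0 (1/2)))
        = ∫⁻ x, ENNReal.ofReal (x ^ 2) ∂(ProbabilityTheory.gaussianReal 0 (1/2)) := by
          rw [MeasureTheory.lintegral_prod _ hmm1.aemeasurable]
          simp [lintegral_const]
      _ < ⊤ := hfin
  · calc ∫⁻ p : ℝ × ℝ, ENNReal.ofReal (p.2 ^ 2)
          ∂((ProbabilityTheory.gaussianReal 0 (1/2)).prod (ProbabilityTheory.gaussianReal 0 (1/2)))
        = ∫⁻ x, ENNReal.ofReal (x ^ 2) ∂(ProbabilityTheory.gaussianReal 0 (1/2)) := by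
          have hmm2 : Measurable (fun p : ℝ × ℝ => ENNReal.ofReal (p.2 ^ 2)) :=
            hm.comp measurable_snd
          rw [MeasureTheory.lintegral_prod _ hmm2.aemeasurable]
          simp [lintegral_const]
      _ < ⊤ := hfin

lemma aux_lintegral_indep_prod_range {Ω : Type*} [MeasurableSpace Ω] (P : Measure Ω)
    [IsProbabilityMeasure P] (φ : ℕ → Ω → ℝ≥0∞) (hmeas : ∀ n, Measurable (φ n))
    (hind : ProbabilityTheory.iIndepFun φ P)
    (m : ℕ) :
    ∫⁻ ω, ∏ n ∈ Finset.range m, φ n ω ∂P = ∏ n ∈ Finset.range m, ∫⁻ ω, φ n ω ∂P := by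
  induction m with
  | zero => simp
  | succ m ih =>
    have hip := hind.indepFun_prod_range_succ hmeas m
    rw [show (∏ j ∈ Finset.range m, φ j) = fun ω => ∏ j ∈ Finset.range m, φ j ω from
      funext fun ω => Finset.prod_apply ω (Finset.range m) φ] at hip
    have h2 := ProbabilityTheory.lintegral_mul_eq_lintegral_mul_lintegral_of_indepFun
      (Finset.measurable_prod _ (fun i _ => hmeas i)) (hmeas m) hip
    simp only [Pi.mul_apply, Finset.prod_apply] at h2
    simp only [Finset.prod_range_succ]
    rw [← ih]
    calc ∫⁻ ω, (∏ n ∈ Finset.range m, φ n ω) * φ m ω ∂P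
        = (∫⁻ ω, ∏ n ∈ Finset.range m, φ n ω ∂P) * ∫⁻ ω, φ m ω ∂P := h2

lemma aux_inv_one_add_le {x : ℝ} (h0 : 0 ≤ x) (h1 : x ≤ 1) : (1 + x)⁻¹ ≤ Real.exp (-(x/2)) := by
  have hxe : 1 - x/2 ≤ Real.exp (-(x/2)) := by
    have := Real.add_one_le_exp (-(x/2))
    linarith
  have hpos : (0:ℝ) < 1 - x/2 := by linarith
  have key : (1 + x)⁻¹ ≤ 1 - x/2 := by
    rw [inv_le_iff_one_le_mul₀ (by linarith)]
    nlinarith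
  linarith

end AuxStatement16


/-- Lower deviation bound: if `u₀ = Σ c_n h_n ∈ ℋ^σ(ℝ³)` with
`λ_n^{2s}|c_n|² ≤ 1` for all `n`, then for all `t ≥ 0` and `N`,
`μ(‖χ(H/N²)u‖_{ℋ^s} ≤ t) ≤ exp(t² - ½‖χ(H/N²)u₀‖²_{ℋ^s})`, where `μ` is the law of the
randomization `u₀^ω`. -/
theorem statement_16
    (B : HermiteBasis 3) (σ s : ℝ) (hσ : 0 ≤ σ) (hσs : σ ≤ s)
    (c : ℕ → ℂ) (hu0 : Summable (fun n => B.lam n ^ (2 * σ) * ‖c n‖ ^ 2))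
    (hsmall : ∀ n, B.lam n ^ (2 * s) * ‖c n‖ ^ 2 ≤ 1)
    {Ω : Type*} [MeasurableSpace Ω] (P : Measure Ω) [IsProbabilityMeasure P]
    (g : ℕ → Ω → ℂ) (hg : IsStdCGaussianSeq P g)
    (χ : ℝ → ℝ) (hχsm : ContDiff ℝ (⊤ : ℕ∞) χ) (hχc : HasCompactSupport χ)
    (hχ01 : ∀ x, 0 ≤ χ x ∧ χ x ≤ 1)
    (hχ1 : ∀ x : ℝ, |x| ≤ 1 → χ x = 1) (hχ0 : ∀ x : ℝ, 2 ≤ |x| → χ x = 0)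
    (t : ℝ) (ht : 0 ≤ t) (N : ℕ) (hN : 1 ≤ N) :
    P {ω | Real.sqrt (∑' n,
        χ (B.lam n ^ 2 / (N : ℝ) ^ 2) ^ 2 * B.lam n ^ (2 * s) * ‖c n * g n ω‖ ^ 2) ≤ t} ≤
      ENNReal.ofReal (Real.exp (t ^ 2 -
        (1/2) * ∑' n, χ (B.lam n ^ 2 / (N : ℝ) ^ 2) ^ 2 * B.lam n ^ (2 * s) * ‖c n‖ ^ 2)) := by
  classical
  obtain ⟨hgmeas, hgindep, hgmap⟩ := hg
  have hl : ∀ n, 0 < B.lam n := B.lam_pos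
  set a : ℕ → ℝ := fun n => χ (B.lam n ^ 2 / (N : ℝ) ^ 2) ^ 2 * B.lam n ^ (2 * s) * ‖c n‖ ^ 2
    with ha_def
  have ha0 : ∀ n, 0 ≤ a n := fun n =>
    mul_nonneg (mul_nonneg (sq_nonneg _) (Real.rpow_nonneg (hl n).le _)) (sq_nonneg _)
  have hχsq : ∀ x, χ x ^ 2 ≤ 1 := by
    intro x; obtain ⟨h0, h1⟩ := hχ01 x; nlinarith
  have hls : ∀ n, 0 ≤ B.lam n ^ (2 * s) * ‖c n‖ ^ 2 := fun n =>
    mul_nonneg (Real.rpow_nonneg (hl n).le _) (sq_nonneg _)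
  have ha1 : ∀ n, a n ≤ 1 := by
    intro n
    calc a n = χ (B.lam n ^ 2 / (N : ℝ) ^ 2) ^ 2 * (B.lam n ^ (2 * s) * ‖c n‖ ^ 2) := by
          rw [ha_def]; ring
      _ ≤ 1 * 1 := mul_le_mul (hχsq _) (hsmall n) (hls n) zero_le_one
      _ = 1 := one_mul 1
  have hNpos : (0:ℝ) < (N : ℝ) ^ 2 := by
    have h1 : (1:ℝ) ≤ (N : ℝ) := by exact_mod_cast hN
    positivity
  have hsum : Summable a := by
    apply Summable.of_nonneg_of_le ha0 ?_ (hu0.mul_left ((2 * (N:ℝ) ^ 2) ^ (s - σ)))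
    intro n
    by_cases hz : χ (B.lam n ^ 2 / (N : ℝ) ^ 2) = 0
    · have hz2 : a n = 0 := by rw [ha_def]; simp [hz]
      rw [hz2]
      exact mul_nonneg (Real.rpow_nonneg (by positivity) _)
        (mul_nonneg (Real.rpow_nonneg (hl n).le _) (sq_nonneg _))
    · have hlt : B.lam n ^ 2 / (N : ℝ) ^ 2 < 2 := by
        by_contra hge
        push_neg at hge
        exact hz (hχ0 _ (by rwa [_root_.abs_of_nonneg (by positivity)]))
      have hlam2 : B.lam n ^ 2 ≤ 2 * (N : ℝ) ^ 2 := by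
        rw [div_lt_iff₀ hNpos] at hlt
        linarith
      have h2s : B.lam n ^ (2 * s) ≤ (2 * (N:ℝ) ^ 2) ^ (s - σ) * B.lam n ^ (2 * σ) := by
        have e1 : B.lam n ^ (2 * s) = (B.lam n ^ 2) ^ (s - σ) * B.lam n ^ (2 * σ) := by
          rw [show ((B.lam n ^ 2 : ℝ) : ℝ) = B.lam n ^ ((2:ℕ):ℝ) from
            (Real.rpow_natCast _ 2).symm, ← Real.rpow_mul (hl n).le, ← Real.rpow_add (hl n)]
          norm_num
          ring_nf
        rw [e1]
        exact mul_le_mul_of_nonneg_right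
          (Real.rpow_le_rpow (sq_nonneg _) hlam2 (by linarith))
          (Real.rpow_nonneg (hl n).le _)
      calc a n ≤ B.lam n ^ (2 * s) * ‖c n‖ ^ 2 := by
            calc a n = χ (B.lam n ^ 2 / (N : ℝ) ^ 2) ^ 2 * (B.lam n ^ (2 * s) * ‖c n‖ ^ 2) := by
                  rw [ha_def]; ring
              _ ≤ 1 * (B.lam n ^ (2 * s) * ‖c n‖ ^ 2) :=
                  mul_le_mul_of_nonneg_right (hχsq _) (hls n)
              _ = _ := one_mul _
        _ ≤ ((2 * (N:ℝ) ^ 2) ^ (s - σ) * B.lam n ^ (2 * σ)) * ‖c n‖ ^ 2 :=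
            mul_le_mul_of_nonneg_right h2s (sq_nonneg _)
        _ = (2 * (N:ℝ) ^ 2) ^ (s - σ) * (B.lam n ^ (2 * σ) * ‖c n‖ ^ 2) := by ring
  have hq : ∀ ω : Ω, (fun n => χ (B.lam n ^ 2 / (N : ℝ) ^ 2) ^ 2 * B.lam n ^ (2 * s)
      * ‖c n * g n ω‖ ^ 2) = fun n => a n * ‖g n ω‖ ^ 2 := by
    intro ω; funext n
    simp only [ha_def, norm_mul, mul_pow]
    ring
  have hq0 : ∀ n (ω : Ω), 0 ≤ a n * ‖g n ω‖ ^ 2 := fun n ω =>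
    mul_nonneg (ha0 n) (sq_nonneg _)
  suffices h : P {ω | Real.sqrt (∑' n, a n * ‖g n ω‖ ^ 2) ≤ t}
      ≤ ENNReal.ofReal (Real.exp (t ^ 2 - (∑' n, a n) / 2)) by
    have hset : {ω | Real.sqrt (∑' n, χ (B.lam n ^ 2 / (N : ℝ) ^ 2) ^ 2 * B.lam n ^ (2 * s)
        * ‖c n * g n ω‖ ^ 2) ≤ t} = {ω | Real.sqrt (∑' n, a n * ‖g n ω‖ ^ 2) ≤ t} := by
      ext ω
      rw [Set.mem_setOf_eq, Set.mem_setOf_eq, hq ω]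
    rw [hset]
    have harith : t ^ 2 - 1/2 * ∑' n, a n = t ^ 2 - (∑' n, a n) / 2 := by ring
    rw [show (∑' n, χ (B.lam n ^ 2 / (N : ℝ) ^ 2) ^ 2 * B.lam n ^ (2 * s) * ‖c n‖ ^ 2)
      = ∑' n, a n from rfl, harith]
    exact h
  -- the ENNReal-valued series
  set Q : Ω → ℝ≥0∞ := fun ω => ∑' n, ENNReal.ofReal (a n * ‖g n ω‖ ^ 2) with hQ_def
  have hQmeas_n : ∀ n, Measurable fun ω => ENNReal.ofReal (a n * ‖g n ω‖ ^ 2) := fun n =>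
    ENNReal.measurable_ofReal.comp (((hgmeas n).norm.pow_const 2).const_mul (a n))
  have hQmeas : Measurable Q := Measurable.ennreal_tsum hQmeas_n
  have hQint : ∫⁻ ω, Q ω ∂P < ⊤ := by
    have hstep : ∫⁻ ω, Q ω ∂P = ∑' n, ∫⁻ ω, ENNReal.ofReal (a n * ‖g n ω‖ ^ 2) ∂P := by
      simp only [hQ_def]
      exact lintegral_tsum (fun n => (hQmeas_n n).aemeasurable)
    have hone : ∀ n, ∫⁻ ω, ENNReal.ofReal (a n * ‖g n ω‖ ^ 2) ∂P
        = ENNReal.ofReal (a n) * ∫⁻ z, ENNReal.ofReal (‖z‖ ^ 2) ∂stdGaussianC := by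
      intro n
      have he : ∀ ω : Ω, ENNReal.ofReal (a n * ‖g n ω‖ ^ 2)
          = ENNReal.ofReal (a n) * ENNReal.ofReal (‖g n ω‖ ^ 2) := fun ω =>
        ENNReal.ofReal_mul (ha0 n)
      simp only [he]
      have hmg : Measurable fun ω : Ω => ENNReal.ofReal (‖g n ω‖ ^ 2) :=
        aux_meas_normsq.comp (hgmeas n)
      rw [lintegral_const_mul _ hmg]
      congr 1
      rw [← hgmap n, lintegral_map aux_meas_normsq (hgmeas n)]
    rw [hstep]
    simp only [hone]
    rw [ENNReal.tsum_mul_right, ← ENNReal.ofReal_tsum_of_nonneg ha0 hsum]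
    exact ENNReal.mul_lt_top ENNReal.ofReal_lt_top aux_gauss_cplx_sq
  have hnull : P {ω | Q ω = ⊤} = 0 := by
    have h2 := ae_lt_top hQmeas hQint.ne
    rw [MeasureTheory.ae_iff] at h2
    simpa [lt_top_iff_ne_top, not_not] using h2
  -- inclusion into the finite-sum event
  have hsub : ∀ m : ℕ, {ω | Real.sqrt (∑' n, a n * ‖g n ω‖ ^ 2) ≤ t}
      ⊆ {ω | ∑ n ∈ Finset.range m, a n * ‖g n ω‖ ^ 2 ≤ t ^ 2} ∪ {ω | Q ω = ⊤} := by
    intro m ω hω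
    by_cases hfin : Q ω = ⊤
    · exact Or.inr hfin
    · left
      have hsummω : Summable (fun n => a n * ‖g n ω‖ ^ 2) := by
        have h3 := ENNReal.summable_toReal hfin
        refine h3.congr (fun n => ?_)
        exact ENNReal.toReal_ofReal (hq0 n ω)
      have hnn : 0 ≤ ∑' n, a n * ‖g n ω‖ ^ 2 := tsum_nonneg (fun n => hq0 n ω)
      have hle : ∑' n, a n * ‖g n ω‖ ^ 2 ≤ t ^ 2 := by
        have h4 := pow_le_pow_left₀ (Real.sqrt_nonneg _) hω 2
        rwa [Real.sq_sqrt hnn] at h4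
      exact le_trans (Summable.sum_le_tsum (Finset.range m) (fun n _ => hq0 n ω) hsummω) hle
  -- the exponential functionals
  set ψ : ℕ → ℂ → ℝ≥0∞ := fun n z => ENNReal.ofReal (Real.exp (-(a n * ‖z‖ ^ 2))) with hψ_def
  have hψmeas : ∀ n, Measurable (ψ n) := fun n => aux_meas_exp_nsq
  set φ : ℕ → Ω → ℝ≥0∞ := fun n ω => ENNReal.ofReal (Real.exp (-(a n * ‖g n ω‖ ^ 2)))
    with hφ_def
  have hφmeas : ∀ n, Measurable (φ n) := fun n => (hψmeas n).comp (hgmeas n)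
  have hφindep : ProbabilityTheory.iIndepFun
      φ P := hgindep.comp ψ hψmeas
  have hφint : ∀ n, ∫⁻ ω, φ n ω ∂P = ENNReal.ofReal ((1 + a n)⁻¹) := by
    intro n
    have he : ∫⁻ ω, φ n ω ∂P = ∫⁻ z, ψ n z ∂(Measure.map (g n) P) :=
      (lintegral_map (hψmeas n) (hgmeas n)).symm
    rw [he, hgmap n]
    exact aux_gauss_cplx_moment (ha0 n)
  -- Chebyshev bound for each finite stage
  have hcheb : ∀ m : ℕ, P {ω | ∑ n ∈ Finset.range m, a n * ‖g n ω‖ ^ 2 ≤ t ^ 2}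
      ≤ ENNReal.ofReal (Real.exp (t ^ 2 - (∑ n ∈ Finset.range m, a n) / 2)) := by
    intro m
    have hFmeas : Measurable fun ω => ∏ n ∈ Finset.range m, φ n ω :=
      Finset.measurable_prod _ (fun i _ => hφmeas i)
    have hstep : {ω | ∑ n ∈ Finset.range m, a n * ‖g n ω‖ ^ 2 ≤ t ^ 2}
        ⊆ {ω | ENNReal.ofReal (Real.exp (-t ^ 2)) ≤ ∏ n ∈ Finset.range m, φ n ω} := by
      intro ω hω
      have hprod : ∏ n ∈ Finset.range m, φ n ω
          = ENNReal.ofReal (Real.exp (-(∑ n ∈ Finset.range m, a n * ‖g n ω‖ ^ 2))) := by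
        rw [show -(∑ n ∈ Finset.range m, a n * ‖g n ω‖ ^ 2)
            = ∑ n ∈ Finset.range m, -(a n * ‖g n ω‖ ^ 2) from
          (Finset.sum_neg_distrib _).symm, Real.exp_sum,
          ENNReal.ofReal_prod_of_nonneg (fun i _ => Real.exp_nonneg _)]
      rw [Set.mem_setOf_eq, hprod]
      apply ENNReal.ofReal_le_ofReal
      apply Real.exp_le_exp.mpr
      simpa using hω
    calc P {ω | ∑ n ∈ Finset.range m, a n * ‖g n ω‖ ^ 2 ≤ t ^ 2}
        = ENNReal.ofReal (Real.exp (t ^ 2)) * (ENNReal.ofReal (Real.exp (-t ^ 2))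
          * P {ω | ∑ n ∈ Finset.range m, a n * ‖g n ω‖ ^ 2 ≤ t ^ 2}) := by
          rw [← mul_assoc, ← ENNReal.ofReal_mul (Real.exp_nonneg _), ← Real.exp_add]
          simp
      _ ≤ ENNReal.ofReal (Real.exp (t ^ 2)) * ∫⁻ ω, ∏ n ∈ Finset.range m, φ n ω ∂P := by
          apply mul_le_mul_right
          calc ENNReal.ofReal (Real.exp (-t ^ 2))
              * P {ω | ∑ n ∈ Finset.range m, a n * ‖g n ω‖ ^ 2 ≤ t ^ 2}
              ≤ ENNReal.ofReal (Real.exp (-t ^ 2)) * P {ω | ENNReal.ofReal (Real.exp (-t ^ 2))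
                ≤ ∏ n ∈ Finset.range m, φ n ω} :=
                mul_le_mul_right (measure_mono hstep) _
            _ ≤ ∫⁻ ω, ∏ n ∈ Finset.range m, φ n ω ∂P :=
                mul_meas_ge_le_lintegral₀ hFmeas.aemeasurable _
      _ = ENNReal.ofReal (Real.exp (t ^ 2)) * ∏ n ∈ Finset.range m, ∫⁻ ω, φ n ω ∂P := by
          rw [aux_lintegral_indep_prod_range P φ hφmeas hφindep m]
      _ = ENNReal.ofReal (Real.exp (t ^ 2))
          * ∏ n ∈ Finset.range m, ENNReal.ofReal ((1 + a n)⁻¹) := by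
          simp only [hφint]
      _ ≤ ENNReal.ofReal (Real.exp (t ^ 2))
          * ∏ n ∈ Finset.range m, ENNReal.ofReal (Real.exp (-(a n / 2))) := by
          apply mul_le_mul_right
          exact Finset.prod_le_prod' (fun i _ =>
            ENNReal.ofReal_le_ofReal (aux_inv_one_add_le (ha0 i) (ha1 i)))
      _ = ENNReal.ofReal (Real.exp (t ^ 2 - (∑ n ∈ Finset.range m, a n) / 2)) := by
          rw [← ENNReal.ofReal_prod_of_nonneg (fun i _ => Real.exp_nonneg _), ← Real.exp_sum,
            ← ENNReal.ofReal_mul (Real.exp_nonneg _), ← Real.exp_add]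
          congr 1
          rw [Finset.sum_neg_distrib, ← Finset.sum_div, ← sub_eq_add_neg]
  -- combine
  have hbound : ∀ m : ℕ, P {ω | Real.sqrt (∑' n, a n * ‖g n ω‖ ^ 2) ≤ t}
      ≤ ENNReal.ofReal (Real.exp (t ^ 2 - (∑ n ∈ Finset.range m, a n) / 2)) := by
    intro m
    calc P {ω | Real.sqrt (∑' n, a n * ‖g n ω‖ ^ 2) ≤ t}
        ≤ P ({ω | ∑ n ∈ Finset.range m, a n * ‖g n ω‖ ^ 2 ≤ t ^ 2} ∪ {ω | Q ω = ⊤}) :=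
          measure_mono (hsub m)
      _ ≤ P {ω | ∑ n ∈ Finset.range m, a n * ‖g n ω‖ ^ 2 ≤ t ^ 2} + P {ω | Q ω = ⊤} :=
          measure_union_le _ _
      _ = P {ω | ∑ n ∈ Finset.range m, a n * ‖g n ω‖ ^ 2 ≤ t ^ 2} := by
          rw [hnull, add_zero]
      _ ≤ _ := hcheb m
  have htends : Filter.Tendsto
      (fun m => ENNReal.ofReal (Real.exp (t ^ 2 - (∑ n ∈ Finset.range m, a n) / 2)))
      Filter.atTop (nhds (ENNReal.ofReal (Real.exp (t ^ 2 - (∑' n, a n) / 2)))) := by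
    apply (ENNReal.continuous_ofReal.tendsto _).comp
    apply (Real.continuous_exp.tendsto _).comp
    exact Filter.Tendsto.const_sub _ ((hsum.hasSum.tendsto_sum_nat).div_const 2)
  exact ge_of_tendsto' htends hbound


end
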